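/- Let the CII estimate be Î_K = Σ_{ℓ=0}^{n−k} C(n−k,ℓ)·λ_{k,ℓ}·Σ_{W⊆K} (−1)^{k−|W|}·Î_{K,ℓ}^W, where for every W ⊆ K and ℓ ∈ L^{|W|} the stratum estimate Î_{K,ℓ}^W follows the stratum sampling model with count M_{W,ℓ} = 1 + Y_{W,ℓ}, Y_{W,ℓ} binomially distributed with parameters B̃ ≥ 1 and p_{W,ℓ} ≥ 1/γ_k and independent of that stratum's sample sequence, and Î_{K,ℓ}^W = I_{K,ℓ}^W for ℓ ∉ L^{|W|}. Assume λ_{k,ℓ} > 0 for all ℓ and R_K := Σ_{W⊆K} Σ_{ℓ∈L^{|W|}} r_{K,ℓ,W} > 0. Then for every ε > 0, P(|Î_K − I_K| ≥ ε) ≤ Σ_{W⊆K} Σ_{ℓ∈L^{|W|}} [ exp(−B̃/(2γ_k²)) + 2·exp(−2ε²/(C(n−k,ℓ)²·λ_{k,ℓ}²·R_K²))^⌊B̃/(2γ_k)⌋ / (exp(2ε²/(C(n−k,ℓ)²·λ_{k,ℓ}²·R_K²)) − 1) ]. -/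

import Mathlib

open MeasureTheory ProbabilityTheory Finset
open scoped ENNReal

/-- Finsets carry the discrete σ-algebra. -/
instance finsetMeasurableSpace (n : ℕ) : MeasurableSpace (Finset (Fin n)) := ⊤

/-- The stratum `{S ⊆ N∖K : |S| = ℓ}`. -/
def strata (n : ℕ) (K : Finset (Fin n)) (ℓ : ℕ) : Finset (Finset (Fin n)) :=
  Kᶜ.powerset.filter (fun S => S.card = ℓ)

/-- The stratum value `I_{K,ℓ}^W = (1/C(n−k,ℓ))·Σ_{S ⊆ N∖K, |S|=ℓ} ν(S ∪ W)`. -/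
noncomputable def stratVal (n : ℕ) (ν : Finset (Fin n) → ℝ)
    (K W : Finset (Fin n)) (ℓ : ℕ) : ℝ :=
  (((n - K.card).choose ℓ : ℝ))⁻¹ * ∑ S ∈ strata n K ℓ, ν (S ∪ W)

/-- The stratum variance `σ²_{K,ℓ,W}`: the variance of `ν(S ∪ W)` for `S` uniformly
distributed on `{S ⊆ N∖K : |S| = ℓ}`. -/
noncomputable def stratVar (n : ℕ) (ν : Finset (Fin n) → ℝ)
    (K W : Finset (Fin n)) (ℓ : ℕ) : ℝ :=
  (((n - K.card).choose ℓ : ℝ))⁻¹ *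
    ∑ S ∈ strata n K ℓ, (ν (S ∪ W) - stratVal n ν K W ℓ) ^ 2

/-- The cardinal interaction index `I_K`. -/
noncomputable def CII (n : ℕ) (ν : Finset (Fin n) → ℝ) (lam : ℕ → ℝ)
    (K : Finset (Fin n)) : ℝ :=
  ∑ S ∈ Kᶜ.powerset, lam S.card *
    ∑ W ∈ K.powerset, (-1 : ℝ) ^ (K.card - W.card) * ν (S ∪ W)

/-- The constants `γ_2 = 2(n−1)²` and `γ_k = n^{k−1}·(n−k+1)²` for `k ≥ 3`. -/
noncomputable def gam (n k : ℕ) : ℝ :=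
  if k = 2 then 2 * ((n : ℝ) - 1) ^ 2
  else (n : ℝ) ^ (k - 1) * ((n : ℝ) - k + 1) ^ 2

/-- The stratum estimate: sample mean for estimated strata, exact value otherwise. -/
noncomputable def IhatStrat {Ω : Type*} (n : ℕ) (ν : Finset (Fin n) → ℝ)
    (K : Finset (Fin n)) (L : ℕ → Finset ℕ)
    (S : Finset (Fin n) → ℕ → ℕ → Ω → Finset (Fin n))
    (M : Finset (Fin n) → ℕ → Ω → ℕ) (W : Finset (Fin n)) (ℓ : ℕ) (ω : Ω) : ℝ :=
  if ℓ ∈ L W.card then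
    ((M W ℓ ω : ℝ))⁻¹ * ∑ m ∈ Finset.range (M W ℓ ω), ν (S W ℓ m ω ∪ W)
  else stratVal n ν K W ℓ

/-- The CII estimate `Î_K`. -/
noncomputable def IhatCII {Ω : Type*} (n : ℕ) (ν : Finset (Fin n) → ℝ)
    (K : Finset (Fin n)) (lam : ℕ → ℝ) (L : ℕ → Finset ℕ)
    (S : Finset (Fin n) → ℕ → ℕ → Ω → Finset (Fin n))
    (M : Finset (Fin n) → ℕ → Ω → ℕ) (ω : Ω) : ℝ :=
  ∑ ℓ ∈ Finset.range (n - K.card + 1), ((n - K.card).choose ℓ : ℝ) * lam ℓ *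
    ∑ W ∈ K.powerset, (-1 : ℝ) ^ (K.card - W.card) * IhatStrat n ν K L S M W ℓ ω

/-- The stratum range `r_{K,ℓ,W} = max_{S⊆N∖K,|S|=ℓ} ν(S∪W) − min_{S⊆N∖K,|S|=ℓ} ν(S∪W)`. -/
noncomputable def stratRange (n : ℕ) (ν : Finset (Fin n) → ℝ)
    (K W : Finset (Fin n)) (ℓ : ℕ) : ℝ :=
  sSup ((fun S => ν (S ∪ W)) '' ↑(strata n K ℓ))
    - sInf ((fun S => ν (S ∪ W)) '' ↑(strata n K ℓ))

/-- `R_K = Σ_{W⊆K} Σ_{ℓ∈L^{|W|}} r_{K,ℓ,W}`. -/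
noncomputable def RK (n : ℕ) (ν : Finset (Fin n) → ℝ) (K : Finset (Fin n))
    (L : ℕ → Finset ℕ) : ℝ :=
  ∑ W ∈ K.powerset, ∑ ℓ ∈ L W.card, stratRange n ν K W ℓ


/-! Write `D_{W,ℓ} = Î_{K,ℓ}^W - I_{K,ℓ}^W` for the error of an estimated stratum. Grouping the
subsets `S` of `N ∖ K` by size writes `I_K` in terms of stratum values, so that
`|Î_K - I_K| ≤ Σ_{W,ℓ} C(n-k,ℓ) λ_{k,ℓ} |D_{W,ℓ}|`. Splitting `ε = Σ_{W,ℓ} ε r_{K,ℓ,W} / R_K`,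
the event `|Î_K - I_K| ≥ ε` forces `C(n-k,ℓ) λ_{k,ℓ} |D_{W,ℓ}| ≥ ε r_{K,ℓ,W} / R_K` for some stratum
of positive range (strata of range zero are estimated exactly, almost surely).
For one stratum, either the count `M` is at most `m = ⌊B̃/(2γ_k)⌋`, which by a Chernoff bound for
the binomial lower tail has probability at most `exp(-B̃/(2γ_k²))`, or `M = c > m`, and then
Hoeffding's inequality for the mean of `c` samples gives `2 exp(-a c)` with
`a = 2ε² / (C(n-k,ℓ)² λ_{k,ℓ}² R_K²)`; summing the geometric series over `c > m` gives the second
term. -/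

open Real
open scoped NNReal

instance (n : ℕ) : DiscreteMeasurableSpace (Finset (Fin n)) := ⟨fun _ => trivial⟩

lemma Finset.exists_pos_and_le_of_sum_le_sum {ι : Type*} {s : Finset ι} {x y : ι → ℝ}
    (hxy : ∀ i ∈ s, y i ≤ 0 → x i ≤ y i) (hy : 0 < ∑ i ∈ s, y i)
    (hle : ∑ i ∈ s, y i ≤ ∑ i ∈ s, x i) : ∃ i ∈ s, 0 < y i ∧ y i ≤ x i := by
  by_contra! h
  have hx : ∀ i ∈ s, x i ≤ y i := fun i hi =>
    (le_or_gt (y i) 0).elim (hxy i hi) fun hyi => (h i hi hyi).le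
  obtain ⟨i, hi, hyi⟩ := exists_lt_of_sum_lt (by simpa using hy : ∑ i ∈ s, (0 : ℝ) < _)
  exact (sum_lt_sum hx ⟨i, hi, h i hi hyi⟩).not_ge hle

lemma hasSum_exp_neg_pow_add_succ {q : ℝ} (hq : 0 < q) (m : ℕ) :
    HasSum (fun c : ℕ => exp (-q) ^ (m + 1 + c)) (exp (-q) ^ m / (exp q - 1)) := by
  have hlt : exp (-q) < 1 := exp_lt_one_iff.2 (neg_lt_zero.2 hq)
  have h := (hasSum_geometric_of_lt_one (exp_pos _).le hlt).mul_left (exp (-q) ^ (m + 1))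
  have hq1 : exp q - 1 ≠ 0 := (sub_pos.2 (one_lt_exp_iff.2 hq)).ne'
  have hsum : exp (-q) ^ (m + 1) * (1 - exp (-q))⁻¹ = exp (-q) ^ m / (exp q - 1) := by
    have hkey : exp (-q) * (exp q - 1) = 1 - exp (-q) := by rw [mul_sub, ← exp_add]; simp
    rw [pow_succ, ← hkey]
    field_simp
  simpa only [← pow_add, hsum] using h

lemma one_sub_add_mul_exp_le {p : ℝ} (hp0 : 0 ≤ p) (hp1 : p ≤ 1) (t : ℝ) :
    1 - p + p * exp t ≤ exp (p * t + t ^ 2 / 8) := by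
  set μ : Measure ℝ := bernoulliMeasure 1 0 ⟨p, hp0, hp1⟩
  -- the identity on the support `{0, 1}` of `μ`, clamped so that it is bounded everywhere
  set X : ℝ → ℝ := fun x => max 0 (min x 1)
  have hX : ∀ᵐ x ∂μ, X x ∈ Set.Icc 0 1 :=
    ae_of_all _ fun x => ⟨le_max_left _ _, max_le zero_le_one (min_le_right _ _)⟩
  have hmean : μ[X] = p := by simp [μ, X, integral_bernoulliMeasure]
  have hmgf : mgf (fun x => X x - μ[X]) μ t = (1 - p + p * exp t) * exp (-(p * t)) := by
    rw [hmean, mgf, integral_bernoulliMeasure, smul_eq_mul, smul_eq_mul,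
      show X 1 = 1 by norm_num [X], show X 0 = 0 by norm_num [X],
      show t * (1 - p) = t + -(p * t) by ring, show t * (0 - p) = -(p * t) by ring, exp_add]
    ring
  calc 1 - p + p * exp t = mgf (fun x => X x - μ[X]) μ t * exp (p * t) := by
        rw [hmgf, mul_assoc, ← exp_add, neg_add_cancel, exp_zero, mul_one]
    _ ≤ exp (((‖(1 : ℝ) - 0‖₊ / 2) ^ 2 : ℝ≥0) * t ^ 2 / 2) * exp (p * t) := by
        gcongr
        exact (hasSubgaussianMGF_of_mem_Icc (by fun_prop) hX).mgf_le t
    _ = exp (p * t + t ^ 2 / 8) := by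
        rw [← exp_add]
        norm_num
        ring

lemma sum_range_choose_mul_pow_le_exp {B m : ℕ} {p : ℝ} (hp0 : 0 ≤ p) (hp1 : p ≤ 1)
    (hm : (m : ℝ) ≤ B * p) :
    ∑ j ∈ range m, (B.choose j : ℝ) * p ^ j * (1 - p) ^ (B - j)
      ≤ exp (-2 * (B * p - m) ^ 2 / B) := by
  have hmB : m ≤ B := by
    exact_mod_cast hm.trans (mul_le_of_le_one_right B.cast_nonneg hp1)
  rcases B.eq_zero_or_pos with rfl | hB
  · simp [Nat.le_zero.1 hmB]
  set s := B * p - m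
  set u := 4 * s / B
  have hu : 0 ≤ u := by have := sub_nonneg.2 hm; positivity
  have hterm : ∀ j, 0 ≤ (B.choose j : ℝ) * p ^ j * (1 - p) ^ (B - j) := fun j => by
    have := sub_nonneg.2 hp1; positivity
  -- Chernoff: weight the `j`-th term by `exp (u (m - j)) ≥ 1`, complete the binomial sum, apply
  -- Hoeffding's lemma to each factor; `u = 4s/B` minimises the resulting exponent.
  calc ∑ j ∈ range m, (B.choose j : ℝ) * p ^ j * (1 - p) ^ (B - j)
      ≤ ∑ j ∈ range m, (B.choose j : ℝ) * p ^ j * (1 - p) ^ (B - j) * exp (u * (m - j)) := by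
        refine sum_le_sum fun j hj => le_mul_of_one_le_right (hterm j) (one_le_exp ?_)
        have : (j : ℝ) ≤ m := by exact_mod_cast (mem_range.1 hj).le
        exact mul_nonneg hu (sub_nonneg.2 this)
    _ ≤ ∑ j ∈ range (B + 1),
          (B.choose j : ℝ) * p ^ j * (1 - p) ^ (B - j) * exp (u * (m - j)) :=
        sum_le_sum_of_subset_of_nonneg (range_subset_range.2 (by omega))
          fun j _ _ => mul_nonneg (hterm j) (exp_pos _).le
    _ = exp (u * m) * (p * exp (-u) + (1 - p)) ^ B := by
        rw [add_pow, mul_sum]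
        refine sum_congr rfl fun j _ => ?_
        rw [mul_pow, ← exp_nat_mul, show u * (m - j : ℝ) = u * m + j * -u by ring, exp_add]
        ring
    _ ≤ exp (u * m) * exp (p * -u + (-u) ^ 2 / 8) ^ B := by
        have := one_sub_add_mul_exp_le hp0 hp1 (-u)
        gcongr
        linarith
    _ = exp (-2 * s ^ 2 / B) := by
        rw [← exp_nat_mul, ← exp_add]
        congr 1
        simp only [u, s]
        field_simp
        ring

section BinomialCount

variable {Ω : Type*} {mΩ : MeasurableSpace Ω} {μ : Measure Ω} [IsProbabilityMeasure μ]
  {M : Ω → ℕ} {B : ℕ} {p : ℝ}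

lemma measure_eq_zero_of_binomial_succ (hM : Measurable M) (hp0 : 0 ≤ p) (hp1 : p ≤ 1)
    (hbin : ∀ j : ℕ, μ {ω | M ω = j + 1}
      = ENNReal.ofReal ((B.choose j : ℝ) * p ^ j * (1 - p) ^ (B - j))) :
    μ {ω | M ω = 0} = 0 := by
  have h1p := sub_nonneg.2 hp1
  have hsucc : ∑' j : ℕ, μ {ω | M ω = j + 1} = 1 := by
    rw [tsum_eq_sum (s := range (B + 1)) fun j hj => by
      simp [hbin, Nat.choose_eq_zero_of_lt (by simpa [Nat.lt_succ_iff] using hj : B < j)]]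
    rw [sum_congr rfl fun j _ => hbin j, ← ENNReal.ofReal_sum_of_nonneg fun j _ => by positivity,
      ← ENNReal.ofReal_one]
    congr 1
    have hbinom := (add_pow p (1 - p) B).symm
    rw [add_sub_cancel, one_pow] at hbinom
    exact (sum_congr rfl fun j _ => by ring).trans hbinom
  have htotal : ∑' c : ℕ, μ (M ⁻¹' {c}) = 1 := by
    rw [← tsum_univ, tsum_measure_preimage_singleton Set.countable_univ
      fun c _ => hM (measurableSet_singleton c), Set.preimage_univ, measure_univ]
  rw [tsum_eq_zero_add' ENNReal.summable, show ∑' j : ℕ, μ (M ⁻¹' {j + 1}) = 1 from hsucc]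
    at htotal
  exact (ENNReal.add_left_inj ENNReal.one_ne_top).1 (htotal.trans (zero_add 1).symm)

lemma measure_le_eq_ofReal_sum_choose (hM : Measurable M) (hp0 : 0 ≤ p) (hp1 : p ≤ 1)
    (hbin : ∀ j : ℕ, μ {ω | M ω = j + 1}
      = ENNReal.ofReal ((B.choose j : ℝ) * p ^ j * (1 - p) ^ (B - j))) (m : ℕ) :
    μ {ω | M ω ≤ m}
      = ENNReal.ofReal (∑ j ∈ range m, (B.choose j : ℝ) * p ^ j * (1 - p) ^ (B - j)) := by
  have h1p := sub_nonneg.2 hp1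
  have hset : {ω | M ω ≤ m} = M ⁻¹' ↑(range (m + 1)) := by
    ext ω; simp
  rw [hset, ← sum_measure_preimage_singleton _ fun c _ => hM (measurableSet_singleton c),
    sum_range_succ', ENNReal.ofReal_sum_of_nonneg fun j _ => by positivity]
  simp only [Set.preimage, Set.mem_singleton_iff]
  rw [measure_eq_zero_of_binomial_succ hM hp0 hp1 hbin, add_zero]
  exact sum_congr rfl fun j _ => hbin j

lemma measure_le_floor_le_exp (hM : Measurable M) {γ : ℝ} (hγ : 0 < γ) (hpγ : 1 / γ ≤ p)
    (hp1 : p ≤ 1)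
    (hbin : ∀ j : ℕ, μ {ω | M ω = j + 1}
      = ENNReal.ofReal ((B.choose j : ℝ) * p ^ j * (1 - p) ^ (B - j))) :
    μ {ω | M ω ≤ ⌊(B : ℝ) / (2 * γ)⌋₊} ≤ ENNReal.ofReal (exp (-B / (2 * γ ^ 2))) := by
  have hp0 : 0 ≤ p := (one_div_pos.2 hγ).le.trans hpγ
  set m := ⌊(B : ℝ) / (2 * γ)⌋₊
  have hm : (m : ℝ) ≤ B / (2 * γ) := Nat.floor_le (by positivity)
  have hBp : B / γ ≤ B * p := by
    rw [div_eq_mul_one_div]; exact mul_le_mul_of_nonneg_left hpγ B.cast_nonneg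
  have hdev : B / (2 * γ) ≤ B * p - m := by
    have : B / γ = B / (2 * γ) + B / (2 * γ) := by field_simp; ring
    linarith
  rw [measure_le_eq_ofReal_sum_choose hM hp0 hp1 hbin]
  refine ENNReal.ofReal_le_ofReal ((sum_range_choose_mul_pow_le_exp hp0 hp1 (by linarith)).trans ?_)
  calc exp (-2 * (B * p - m) ^ 2 / B) ≤ exp (-2 * (B / (2 * γ)) ^ 2 / B) := by
        refine exp_le_exp.2 (div_le_div_of_nonneg_right ?_ B.cast_nonneg)
        nlinarith [pow_le_pow_left₀ (by positivity) hdev 2]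
    _ = exp (-B / (2 * γ ^ 2)) := by
        rcases eq_or_ne (B : ℝ) 0 with hB | hB
        · simp [hB]
        · congr 1; field_simp

end BinomialCount

section Hoeffding

variable {Ω : Type*} {mΩ : MeasurableSpace Ω} {μ : Measure Ω} [IsProbabilityMeasure μ]
  {X : ℕ → Ω → ℝ}

lemma measureReal_abs_sum_range_ge_le_of_iIndepFun (h_indep : iIndepFun X μ) {c : ℝ≥0} {N : ℕ}
    (h_subG : ∀ i < N, HasSubgaussianMGF (X i) c μ) {t : ℝ} (ht : 0 ≤ t) :
    μ.real {ω | t ≤ |∑ i ∈ range N, X i ω|} ≤ 2 * exp (-t ^ 2 / (2 * N * c)) := by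
  have h_upper := HasSubgaussianMGF.measure_sum_range_ge_le_of_iIndepFun h_indep h_subG ht
  have h_lower := HasSubgaussianMGF.measure_sum_range_ge_le_of_iIndepFun
    (h_indep.comp (fun _ => Neg.neg) fun _ => measurable_neg) (fun i hi => (h_subG i hi).neg) ht
  calc μ.real {ω | t ≤ |∑ i ∈ range N, X i ω|}
      ≤ μ.real ({ω | t ≤ ∑ i ∈ range N, X i ω} ∪ {ω | t ≤ ∑ i ∈ range N, (Neg.neg ∘ X i) ω}) := by
        refine measureReal_mono (fun ω hω => ?_)
        simpa [sum_neg_distrib, le_abs] using hω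
    _ ≤ _ := (measureReal_union_le _ _).trans (by linarith)

lemma measureReal_abs_mean_sub_ge_le_of_mem_Icc (hX : ∀ i, Measurable (X i))
    (h_indep : iIndepFun X μ)
    {a b v : ℝ} (hab : ∀ i, ∀ᵐ ω ∂μ, X i ω ∈ Set.Icc a b) (hmean : ∀ i, μ[X i] = v)
    {N : ℕ} (hN : 0 < N) {t : ℝ} (ht : 0 ≤ t) :
    μ.real {ω | t ≤ |(N : ℝ)⁻¹ * ∑ i ∈ range N, X i ω - v|}
      ≤ 2 * exp (-2 * N * t ^ 2 / (b - a) ^ 2) := by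
  have hN' : (0 : ℝ) < N := by exact_mod_cast hN
  have h_subG : ∀ i < N, HasSubgaussianMGF (fun ω => X i ω - v) ((‖b - a‖₊ / 2) ^ 2) μ :=
    fun i _ => hmean i ▸ hasSubgaussianMGF_of_mem_Icc (hX i).aemeasurable (hab i)
  have h := measureReal_abs_sum_range_ge_le_of_iIndepFun
    (h_indep.comp (fun _ x => x - v) fun _ => measurable_id.sub_const v) h_subG
    (mul_nonneg hN'.le ht)
  convert h using 3
  · ext ω
    have hsum : ∑ i ∈ range N, ((fun x => x - v) ∘ X i) ω
        = N * ((N : ℝ)⁻¹ * ∑ i ∈ range N, X i ω - v) := by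
      simp only [Function.comp_apply, sum_sub_distrib, sum_const, card_range, nsmul_eq_mul]
      field_simp
    rw [hsum, abs_mul, abs_of_pos hN', mul_le_mul_iff_right₀ hN']
  · push_cast [coe_nnnorm, Real.norm_eq_abs, div_pow, sq_abs]
    rcases eq_or_ne (b - a) 0 with hba | hba
    · simp [hba]
    · field_simp

lemma measure_abs_randomMean_sub_ge_le (hX : ∀ i, Measurable (X i)) (h_indep : iIndepFun X μ)
    {a b v : ℝ} (hab : ∀ i, ∀ᵐ ω ∂μ, X i ω ∈ Set.Icc a b) (hlt : a < b) (hmean : ∀ i, μ[X i] = v)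
    (M : Ω → ℕ) (m : ℕ) {t : ℝ} (ht : 0 < t) :
    μ {ω | t ≤ |(M ω : ℝ)⁻¹ * ∑ i ∈ range (M ω), X i ω - v|}
      ≤ μ {ω | M ω ≤ m} + ENNReal.ofReal (2 * exp (-(2 * t ^ 2 / (b - a) ^ 2)) ^ m
          / (exp (2 * t ^ 2 / (b - a) ^ 2) - 1)) := by
  set q := 2 * t ^ 2 / (b - a) ^ 2
  have hq : 0 < q := by have := sub_pos.2 hlt; positivity
  set E : ℕ → Set Ω := fun N => {ω | t ≤ |(N : ℝ)⁻¹ * ∑ i ∈ range N, X i ω - v|}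
  have hsub : {ω | t ≤ |(M ω : ℝ)⁻¹ * ∑ i ∈ range (M ω), X i ω - v|}
      ⊆ {ω | M ω ≤ m} ∪ ⋃ c : ℕ, E (m + 1 + c) := by
    intro ω hω
    by_cases hM : M ω ≤ m
    · exact Or.inl hM
    · refine Or.inr (Set.mem_iUnion.2 ⟨M ω - (m + 1), ?_⟩)
      rwa [show m + 1 + (M ω - (m + 1)) = M ω by omega]
  have hE : ∀ c : ℕ, μ (E (m + 1 + c)) ≤ ENNReal.ofReal (2 * exp (-q) ^ (m + 1 + c)) := by
    intro c
    rw [← ofReal_measureReal]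
    refine ENNReal.ofReal_le_ofReal ((measureReal_abs_mean_sub_ge_le_of_mem_Icc hX h_indep hab hmean
      (by omega) ht.le).trans_eq ?_)
    rw [← exp_nat_mul]
    simp only [q]
    ring_nf
  have hgeom := (hasSum_exp_neg_pow_add_succ hq m).mul_left 2
  calc _ ≤ μ {ω | M ω ≤ m} + μ (⋃ c : ℕ, E (m + 1 + c)) :=
        (measure_mono hsub).trans (measure_union_le _ _)
    _ ≤ μ {ω | M ω ≤ m} + ∑' c : ℕ, ENNReal.ofReal (2 * exp (-q) ^ (m + 1 + c)) :=
        add_le_add_right ((measure_iUnion_le _).trans (ENNReal.tsum_le_tsum hE)) _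
    _ = _ := by
        rw [← ENNReal.ofReal_tsum_of_nonneg (fun c => by positivity) hgeom.summable,
          hgeom.tsum_eq, mul_div_assoc]

end Hoeffding

lemma gam_pos {n k : ℕ} (hkn : k ≤ n) : 0 < gam n k := by
  have hk : (k : ℝ) ≤ n := by exact_mod_cast hkn
  unfold gam
  split_ifs with h2
  · subst h2
    exact mul_pos two_pos (pow_pos (by push_cast at hk; linarith) 2)
  · rcases k.eq_zero_or_pos with rfl | hk0
    · simp only [zero_tsub, pow_zero, CharP.cast_eq_zero, sub_zero, one_mul]
      positivity
    · have : (0 : ℝ) < n := by exact_mod_cast hk0.trans_le hkn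
      have : (0 : ℝ) < n - k + 1 := by linarith
      positivity

section Strata

variable {n : ℕ} {K W : Finset (Fin n)} {ℓ : ℕ} {ν : Finset (Fin n) → ℝ}

lemma card_strata : #(strata n K ℓ) = (n - #K).choose ℓ := by
  rw [strata, ← powersetCard_eq_filter, card_powersetCard, card_compl, Fintype.card_fin]

lemma strata_nonempty (hℓ : ℓ ≤ n - #K) : (strata n K ℓ).Nonempty := by
  rw [← card_pos, card_strata]
  exact Nat.choose_pos hℓ

lemma sum_strata_eq_choose_mul_stratVal (hℓ : ℓ ≤ n - #K) :
    ∑ S ∈ strata n K ℓ, ν (S ∪ W) = (n - #K).choose ℓ * stratVal n ν K W ℓ := by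
  have : ((n - #K).choose ℓ : ℝ) ≠ 0 := by exact_mod_cast (Nat.choose_pos hℓ).ne'
  rw [stratVal, mul_inv_cancel_left₀ this]

lemma stratRange_eq_sup'_sub_inf' (hne : (strata n K ℓ).Nonempty) :
    stratRange n ν K W ℓ = (strata n K ℓ).sup' hne (fun S => ν (S ∪ W))
      - (strata n K ℓ).inf' hne (fun S => ν (S ∪ W)) := by
  rw [stratRange, sup'_eq_csSup_image, inf'_eq_csInf_image]

lemma stratRange_nonneg (hℓ : ℓ ≤ n - #K) : 0 ≤ stratRange n ν K W ℓ := by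
  obtain ⟨T, hT⟩ := strata_nonempty hℓ
  rw [stratRange_eq_sup'_sub_inf' ⟨T, hT⟩, sub_nonneg]
  exact (inf'_le _ hT).trans (le_sup' (fun S => ν (S ∪ W)) hT)

lemma eq_stratVal_of_stratRange_eq_zero (hℓ : ℓ ≤ n - #K) (hr : stratRange n ν K W ℓ = 0)
    {T : Finset (Fin n)} (hT : T ∈ strata n K ℓ) : ν (T ∪ W) = stratVal n ν K W ℓ := by
  have hne := strata_nonempty (K := K) hℓ
  rw [stratRange_eq_sup'_sub_inf' hne, sub_eq_zero] at hr
  have hconst : ∀ S ∈ strata n K ℓ, ν (S ∪ W) = (strata n K ℓ).inf' hne (fun S => ν (S ∪ W)) :=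
    fun S hS => le_antisymm (hr ▸ le_sup' (fun S => ν (S ∪ W)) hS) (inf'_le _ hS)
  have hchoose : ((n - #K).choose ℓ : ℝ) ≠ 0 := by exact_mod_cast (Nat.choose_pos hℓ).ne'
  rw [stratVal, sum_congr rfl hconst, sum_const, card_strata, nsmul_eq_mul, hconst T hT]
  field_simp

end Strata

section UniformSample

variable {Ω : Type*} {mΩ : MeasurableSpace Ω} {μ : Measure Ω}
  {n : ℕ} {K W : Finset (Fin n)} {ℓ : ℕ} {ν : Finset (Fin n) → ℝ}

lemma ae_mem_strata {f : Ω → Finset (Fin n)}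
    (hunif : ∀ T : Finset (Fin n), μ {ω | f ω = T}
      = if T ∈ strata n K ℓ then (#(strata n K ℓ) : ℝ≥0∞)⁻¹ else 0) :
    ∀ᵐ ω ∂μ, f ω ∈ strata n K ℓ := by
  change μ (f ⁻¹' (↑(strata n K ℓ))ᶜ) = 0
  rw [measure_preimage_eq_zero_iff_of_countable (Set.to_countable _)]
  intro T hT
  exact (hunif T).trans (if_neg hT)

lemma integral_eq_stratVal [IsFiniteMeasure μ] {f : Ω → Finset (Fin n)} (hf : Measurable f)
    (hunif : ∀ T : Finset (Fin n), μ {ω | f ω = T}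
      = if T ∈ strata n K ℓ then (#(strata n K ℓ) : ℝ≥0∞)⁻¹ else 0) :
    ∫ ω, ν (f ω ∪ W) ∂μ = stratVal n ν K W ℓ := by
  calc ∫ ω, ν (f ω ∪ W) ∂μ = ∫ T, ν (T ∪ W) ∂(μ.map f) :=
        (integral_map (f := fun T => ν (T ∪ W)) hf.aemeasurable
          Measurable.of_discrete.aestronglyMeasurable).symm
    _ = ∑ T, (μ.map f).real {T} * ν (T ∪ W) := integral_fintype .of_finite
    _ = stratVal n ν K W ℓ := by
        simp_rw [measureReal_def, Measure.map_apply hf (measurableSet_singleton _), Set.preimage,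
          Set.mem_singleton_iff, hunif, apply_ite ENNReal.toReal, ite_mul, ENNReal.toReal_zero,
          zero_mul, sum_ite_mem, univ_inter, ENNReal.toReal_inv, ENNReal.toReal_natCast,
          card_strata, stratVal, mul_sum]

variable {S : ℕ → Ω → Finset (Fin n)}
  (hunif : ∀ (i : ℕ) (T : Finset (Fin n)), μ {ω | S i ω = T}
    = if T ∈ strata n K ℓ then (#(strata n K ℓ) : ℝ≥0∞)⁻¹ else 0)
include hunif

lemma ae_mean_eq_stratVal_of_stratRange_eq_zero (hℓ : ℓ ≤ n - #K)
    (hr : stratRange n ν K W ℓ = 0) {M : Ω → ℕ} (hM : ∀ᵐ ω ∂μ, M ω ≠ 0) :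
    ∀ᵐ ω ∂μ, (M ω : ℝ)⁻¹ * ∑ i ∈ range (M ω), ν (S i ω ∪ W) = stratVal n ν K W ℓ := by
  filter_upwards [ae_all_iff.2 fun i => ae_mem_strata (hunif i), hM] with ω hS hM
  rw [sum_congr rfl fun i _ => eq_stratVal_of_stratRange_eq_zero hℓ hr (hS i), sum_const,
    card_range, nsmul_eq_mul]
  field_simp

lemma measure_abs_randomMean_sub_stratVal_ge_le [IsProbabilityMeasure μ]
    (hS : ∀ i, Measurable (S i))
    (hiid : iIndepFun S μ) (hℓ : ℓ ≤ n - #K) (hr : 0 < stratRange n ν K W ℓ) (M : Ω → ℕ)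
    (m : ℕ) {t : ℝ} (ht : 0 < t) :
    μ {ω | t ≤ |(M ω : ℝ)⁻¹ * ∑ i ∈ range (M ω), ν (S i ω ∪ W) - stratVal n ν K W ℓ|}
      ≤ μ {ω | M ω ≤ m} + ENNReal.ofReal (2 * exp (-(2 * t ^ 2 / stratRange n ν K W ℓ ^ 2)) ^ m
          / (exp (2 * t ^ 2 / stratRange n ν K W ℓ ^ 2) - 1)) := by
  have hne := strata_nonempty (K := K) hℓ
  have hX : ∀ i, Measurable fun ω => ν (S i ω ∪ W) := fun i =>
    (Measurable.of_discrete (f := fun T => ν (T ∪ W))).comp (hS i)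
  rw [stratRange_eq_sup'_sub_inf' hne] at hr ⊢
  exact measure_abs_randomMean_sub_ge_le hX
    (hiid.comp (fun _ T => ν (T ∪ W)) fun _ => Measurable.of_discrete)
    (fun i => (ae_mem_strata (hunif i)).mono fun ω hω =>
      ⟨inf'_le _ hω, le_sup' (fun S => ν (S ∪ W)) hω⟩)
    (sub_pos.1 hr) (fun i => integral_eq_stratVal (hS i) (hunif i)) M m ht

end UniformSample

lemma CII_eq_sum_stratVal (n : ℕ) (ν : Finset (Fin n) → ℝ) (lam : ℕ → ℝ) (K : Finset (Fin n)) :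
    CII n ν lam K = ∑ ℓ ∈ range (n - #K + 1), ((n - #K).choose ℓ : ℝ) * lam ℓ *
      ∑ W ∈ K.powerset, (-1 : ℝ) ^ (#K - #W) * stratVal n ν K W ℓ := by
  have hcard : ∀ S ∈ Kᶜ.powerset, #S ∈ range (n - #K + 1) := fun S hS => by
    rw [mem_range, Nat.lt_succ_iff]
    simpa [card_compl] using card_le_card (mem_powerset.1 hS)
  rw [CII, ← sum_fiberwise_of_maps_to hcard]
  refine sum_congr rfl fun ℓ hℓ => ?_
  calc ∑ S ∈ strata n K ℓ, lam #S * ∑ W ∈ K.powerset, (-1 : ℝ) ^ (#K - #W) * ν (S ∪ W)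
      = ∑ S ∈ strata n K ℓ, ∑ W ∈ K.powerset, lam ℓ * ((-1 : ℝ) ^ (#K - #W) * ν (S ∪ W)) :=
        sum_congr rfl fun S hS => by rw [(mem_filter.1 hS).2, mul_sum]
    _ = _ := by
        rw [sum_comm, mul_sum]
        refine sum_congr rfl fun W _ => ?_
        rw [← mul_sum, ← mul_sum,
          sum_strata_eq_choose_mul_stratVal (Nat.lt_succ_iff.1 (mem_range.1 hℓ))]
        ring

lemma abs_IhatCII_sub_CII_le {Ω : Type*} {n : ℕ} {ν : Finset (Fin n) → ℝ} {K : Finset (Fin n)}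
    {lam : ℕ → ℝ} {L : ℕ → Finset ℕ} (hL : ∀ w, L w ⊆ range (n - #K + 1))
    (hlam : ∀ ℓ ≤ n - #K, 0 ≤ lam ℓ) (S : Finset (Fin n) → ℕ → ℕ → Ω → Finset (Fin n))
    (M : Finset (Fin n) → ℕ → Ω → ℕ) (ω : Ω) :
    |IhatCII n ν K lam L S M ω - CII n ν lam K| ≤ ∑ W ∈ K.powerset, ∑ ℓ ∈ L #W,
      (n - #K).choose ℓ * lam ℓ * |IhatStrat n ν K L S M W ℓ ω - stratVal n ν K W ℓ| := by
  set D := fun W ℓ => IhatStrat n ν K L S M W ℓ ω - stratVal n ν K W ℓ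
  have hdiff : IhatCII n ν K lam L S M ω - CII n ν lam K = ∑ W ∈ K.powerset,
      ∑ ℓ ∈ range (n - #K + 1), (-1 : ℝ) ^ (#K - #W) * ((n - #K).choose ℓ * lam ℓ * D W ℓ) := by
    rw [IhatCII, CII_eq_sum_stratVal, ← sum_sub_distrib, sum_comm]
    refine sum_congr rfl fun ℓ _ => ?_
    rw [← mul_sub, ← sum_sub_distrib, mul_sum]
    exact sum_congr rfl fun W _ => by ring
  rw [hdiff]
  refine (abs_sum_le_sum_abs _ _).trans (sum_le_sum fun W _ => ?_)
  refine (abs_sum_le_sum_abs _ _).trans_eq ?_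
  rw [← sum_subset (hL #W) fun ℓ _ hℓ => by simp [D, IhatStrat, hℓ]]
  refine sum_congr rfl fun ℓ hℓ => ?_
  have := hlam ℓ (Nat.lt_succ_iff.1 (mem_range.1 (hL #W hℓ)))
  rw [abs_mul, abs_mul, abs_mul, abs_pow, abs_neg, abs_one, one_pow, one_mul, Nat.abs_cast,
    abs_of_nonneg this]

section StratumError

variable {Ω : Type*} {mΩ : MeasurableSpace Ω} {μ : Measure Ω}
  {n : ℕ} {ν : Finset (Fin n) → ℝ} {K : Finset (Fin n)} {L : ℕ → Finset ℕ}
  {S : Finset (Fin n) → ℕ → ℕ → Ω → Finset (Fin n)} {M : Finset (Fin n) → ℕ → Ω → ℕ}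

lemma measureReal_stratumError_ge_le [IsProbabilityMeasure μ] {W : Finset (Fin n)} {ℓ : ℕ}
    (hℓL : ℓ ∈ L #W) (hℓ : ℓ ≤ n - #K)
    (hS : ∀ i, Measurable (S W ℓ i)) (hM : Measurable (M W ℓ)) (hiid : iIndepFun (S W ℓ) μ)
    (hunif : ∀ (i : ℕ) (T : Finset (Fin n)), μ {ω | S W ℓ i ω = T}
      = if T ∈ strata n K ℓ then (#(strata n K ℓ) : ℝ≥0∞)⁻¹ else 0)
    {B : ℕ} {p γ : ℝ} (hγ : 0 < γ) (hp : 1 / γ ≤ p ∧ p ≤ 1)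
    (hbin : ∀ j : ℕ, μ {ω | M W ℓ ω = j + 1}
      = ENNReal.ofReal ((B.choose j : ℝ) * p ^ j * (1 - p) ^ (B - j)))
    {C c R ε : ℝ} (hC : 0 < C) (hc : 0 < c) (hR : 0 < R) (hε : 0 < ε) :
    μ.real {ω | 0 < stratRange n ν K W ℓ ∧ ε * stratRange n ν K W ℓ / R
        ≤ C * c * |IhatStrat n ν K L S M W ℓ ω - stratVal n ν K W ℓ|}
      ≤ exp (-(B : ℝ) / (2 * γ ^ 2)) + 2 * exp (-(2 * ε ^ 2) / (C ^ 2 * c ^ 2 * R ^ 2))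
          ^ ⌊(B : ℝ) / (2 * γ)⌋₊ / (exp (2 * ε ^ 2 / (C ^ 2 * c ^ 2 * R ^ 2)) - 1) := by
  set r := stratRange n ν K W ℓ
  set q := 2 * ε ^ 2 / (C ^ 2 * c ^ 2 * R ^ 2)
  set m := ⌊(B : ℝ) / (2 * γ)⌋₊
  have hq : 0 < q := by positivity
  have htail : 0 ≤ 2 * exp (-q) ^ m / (exp q - 1) :=
    div_nonneg (by positivity) (sub_nonneg.2 (one_le_exp hq.le))
  rw [neg_div (C ^ 2 * c ^ 2 * R ^ 2) (2 * ε ^ 2)]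
  rcases le_or_gt r 0 with hr | hr
  · simp only [hr.not_gt, false_and, Set.ofPred_false, measureReal_empty]
    positivity
  set t := ε * r / R / (C * c)
  have hset : {ω | 0 < r ∧ ε * r / R ≤ C * c * |IhatStrat n ν K L S M W ℓ ω - stratVal n ν K W ℓ|}
      = {ω | t ≤ |(M W ℓ ω : ℝ)⁻¹ * ∑ i ∈ range (M W ℓ ω), ν (S W ℓ i ω ∪ W)
          - stratVal n ν K W ℓ|} := by
    ext ω
    simp only [Set.mem_ofPred_eq, IhatStrat, if_pos hℓL, hr, true_and, t,
      div_le_iff₀ (by positivity : 0 < C * c), mul_comm]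
  have hqt : 2 * t ^ 2 / stratRange n ν K W ℓ ^ 2 = q := by
    have : stratRange n ν K W ℓ ≠ 0 := hr.ne'
    simp only [t, q, r]
    field_simp
  rw [hset]
  refine ENNReal.toReal_le_of_le_ofReal (add_nonneg (exp_pos _).le htail) ?_
  calc _ ≤ μ {ω | M W ℓ ω ≤ m} + ENNReal.ofReal (2 * exp (-q) ^ m / (exp q - 1)) := by
        simpa only [hqt] using measure_abs_randomMean_sub_stratVal_ge_le hunif hS hiid hℓ hr
          (M W ℓ) m (by positivity : 0 < t)
    _ ≤ ENNReal.ofReal (exp (-B / (2 * γ ^ 2)))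
          + ENNReal.ofReal (2 * exp (-q) ^ m / (exp q - 1)) :=
        add_le_add_left (measure_le_floor_le_exp hM hγ hp.1 hp.2 hbin) _
    _ = _ := (ENNReal.ofReal_add (exp_pos _).le htail).symm

lemma ae_IhatStrat_eq_stratVal_of_stratRange_eq_zero [IsProbabilityMeasure μ]
    {W : Finset (Fin n)} {ℓ : ℕ} (hℓL : ℓ ∈ L #W) (hℓ : ℓ ≤ n - #K) (hM : Measurable (M W ℓ))
    (hunif : ∀ (i : ℕ) (T : Finset (Fin n)), μ {ω | S W ℓ i ω = T}
      = if T ∈ strata n K ℓ then (#(strata n K ℓ) : ℝ≥0∞)⁻¹ else 0)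
    {B : ℕ} {p : ℝ} (hp0 : 0 ≤ p) (hp1 : p ≤ 1)
    (hbin : ∀ j : ℕ, μ {ω | M W ℓ ω = j + 1}
      = ENNReal.ofReal ((B.choose j : ℝ) * p ^ j * (1 - p) ^ (B - j)))
    (hr : stratRange n ν K W ℓ = 0) :
    ∀ᵐ ω ∂μ, IhatStrat n ν K L S M W ℓ ω = stratVal n ν K W ℓ := by
  have hM0 : ∀ᵐ ω ∂μ, M W ℓ ω ≠ 0 :=
    ae_iff.2 (by simpa using measure_eq_zero_of_binomial_succ hM hp0 hp1 hbin)
  simpa [IhatStrat, hℓL] using ae_mean_eq_stratVal_of_stratRange_eq_zero hunif hℓ hr hM0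

lemma le_abs_IhatCII_sub_CII_ae_le_biUnion {lam : ℕ → ℝ} (hL : ∀ w, L w ⊆ range (n - #K + 1))
    (hlam : ∀ ℓ ≤ n - #K, 0 ≤ lam ℓ) (hR : 0 < RK n ν K L)
    (hdeg : ∀ W ∈ K.powerset, ∀ ℓ ∈ L #W, stratRange n ν K W ℓ = 0 →
      ∀ᵐ ω ∂μ, IhatStrat n ν K L S M W ℓ ω = stratVal n ν K W ℓ) {ε : ℝ} (hε : 0 < ε) :
    {ω | ε ≤ |IhatCII n ν K lam L S M ω - CII n ν lam K|} ≤ᵐ[μ]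
      ⋃ W ∈ K.powerset, ⋃ ℓ ∈ L #W, {ω | 0 < stratRange n ν K W ℓ ∧
        ε * stratRange n ν K W ℓ / RK n ν K L
          ≤ (n - #K).choose ℓ * lam ℓ * |IhatStrat n ν K L S M W ℓ ω - stratVal n ν K W ℓ|} := by
  have hℓ : ∀ w, ∀ ℓ ∈ L w, ℓ ≤ n - #K := fun w ℓ h => mem_range_succ_iff.1 (hL w h)
  have hdeg' : ∀ᵐ ω ∂μ, ∀ W ∈ K.powerset, ∀ ℓ ∈ L #W, stratRange n ν K W ℓ = 0 →
      IhatStrat n ν K L S M W ℓ ω = stratVal n ν K W ℓ := by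
    simpa only [Filter.eventually_all_finset, Filter.eventually_imp_distrib_left] using hdeg
  filter_upwards [hdeg'] with ω hω hεω
  set I := K.powerset.sigma fun W => L #W
  set y : (Σ _ : Finset (Fin n), ℕ) → ℝ := fun i => ε * stratRange n ν K i.1 i.2 / RK n ν K L
  set x : (Σ _ : Finset (Fin n), ℕ) → ℝ := fun i =>
    (n - #K).choose i.2 * lam i.2 * |IhatStrat n ν K L S M i.1 i.2 ω - stratVal n ν K i.1 i.2|
  have hy : ∑ i ∈ I, y i = ε := by
    rw [← sum_div, ← mul_sum, sum_sigma]
    exact mul_div_cancel_right₀ ε hR.ne'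
  have hxy : ∀ i ∈ I, y i ≤ 0 → x i ≤ y i := fun i hi hyi => by
    rw [mem_sigma] at hi
    have hr : stratRange n ν K i.1 i.2 = 0 := by
      refine le_antisymm ?_ (stratRange_nonneg (hℓ _ _ hi.2))
      by_contra! hr
      exact hyi.not_gt (by positivity)
    simp [x, y, hr, hω i.1 hi.1 i.2 hi.2 hr]
  have hle : ∑ i ∈ I, y i ≤ ∑ i ∈ I, x i := by
    rw [hy, sum_sigma]
    exact hεω.trans (abs_IhatCII_sub_CII_le hL hlam S M ω)
  obtain ⟨⟨W, ℓ⟩, hi, hpos, hxy⟩ :=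
    Finset.exists_pos_and_le_of_sum_le_sum hxy (hy ▸ hε) hle
  rw [mem_sigma] at hi
  change ω ∈ ⋃ W ∈ K.powerset, ⋃ ℓ ∈ L #W, _
  simp only [Set.mem_iUnion]
  exact ⟨W, hi.1, ℓ, hi.2, pos_of_mul_pos_right ((div_pos_iff_of_pos_right hR).1 hpos) hε.le, hxy⟩

end StratumError

theorem cii_estimate_hoeffding_bound_general {Ω : Type*} [MeasureSpace Ω]
    [IsProbabilityMeasure (ℙ : Measure Ω)]
    (n : ℕ) (ν : Finset (Fin n) → ℝ) (K : Finset (Fin n))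
    (lam : ℕ → ℝ) (hlam : ∀ ℓ ≤ n - K.card, 0 < lam ℓ)
    (L : ℕ → Finset ℕ) (hL : ∀ w, L w ⊆ Finset.range (n - K.card + 1))
    (hR : 0 < RK n ν K L)
    (S : Finset (Fin n) → ℕ → ℕ → Ω → Finset (Fin n))
    (M : Finset (Fin n) → ℕ → Ω → ℕ)
    (B : ℕ) (p : Finset (Fin n) → ℕ → ℝ)
    (hSmeas : ∀ W ℓ m, Measurable (S W ℓ m)) (hMmeas : ∀ W ℓ, Measurable (M W ℓ))
    -- within each estimated stratum the samples are i.i.d. uniform on the stratum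
    (hiid : ∀ W, W ⊆ K → ∀ ℓ ∈ L W.card,
      iIndepFun (m := fun _ => finsetMeasurableSpace n) (S W ℓ) ℙ)
    (hunif : ∀ W, W ⊆ K → ∀ ℓ ∈ L W.card, ∀ (m : ℕ) (T : Finset (Fin n)),
      ℙ {ω | S W ℓ m ω = T}
        = if T ∈ strata n K ℓ then ((strata n K ℓ).card : ℝ≥0∞)⁻¹ else 0)
    -- counts: `M_{W,ℓ} = 1 + Y_{W,ℓ}` with `Y_{W,ℓ} ~ Binomial(B̃, p_{W,ℓ})`,
    -- `p_{W,ℓ} ≥ 1/γ_k`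
    (hp : ∀ W, W ⊆ K → ∀ ℓ ∈ L W.card,
      1 / gam n K.card ≤ p W ℓ ∧ p W ℓ ≤ 1)
    (hbin : ∀ W, W ⊆ K → ∀ ℓ ∈ L W.card, ∀ j : ℕ,
      ℙ {ω | M W ℓ ω = j + 1}
        = ENNReal.ofReal ((B.choose j : ℝ) * p W ℓ ^ j * (1 - p W ℓ) ^ (B - j)))
    (ε : ℝ) (hε : 0 < ε) :
    (ℙ {ω | ε ≤ |IhatCII n ν K lam L S M ω - CII n ν lam K|}).toReal
      ≤ ∑ W ∈ K.powerset, ∑ ℓ ∈ L W.card,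
          (Real.exp (-(B : ℝ) / (2 * gam n K.card ^ 2)) +
            2 * Real.exp (-(2 * ε ^ 2) /
                (((n - K.card).choose ℓ : ℝ) ^ 2 * lam ℓ ^ 2 * RK n ν K L ^ 2))
                  ^ (⌊(B : ℝ) / (2 * gam n K.card)⌋₊) /
              (Real.exp ((2 * ε ^ 2) /
                (((n - K.card).choose ℓ : ℝ) ^ 2 * lam ℓ ^ 2 * RK n ν K L ^ 2)) - 1)) := by
  have hγ : 0 < gam n #K := gam_pos (by simpa using card_le_univ K)
  have hℓ : ∀ w, ∀ ℓ ∈ L w, ℓ ≤ n - #K := fun w ℓ h => mem_range_succ_iff.1 (hL w h)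
  have hdeg : ∀ W ∈ K.powerset, ∀ ℓ ∈ L #W, stratRange n ν K W ℓ = 0 →
      ∀ᵐ ω ∂ℙ, IhatStrat n ν K L S M W ℓ ω = stratVal n ν K W ℓ := fun W hW ℓ hℓL => by
    have hWK := mem_powerset.1 hW
    exact ae_IhatStrat_eq_stratVal_of_stratRange_eq_zero hℓL (hℓ _ ℓ hℓL) (hMmeas W ℓ)
      (hunif W hWK ℓ hℓL) ((one_div_pos.2 hγ).le.trans (hp W hWK ℓ hℓL).1) (hp W hWK ℓ hℓL).2
      (hbin W hWK ℓ hℓL)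
  set F : Finset (Fin n) → ℕ → Set Ω := fun W ℓ => {ω | 0 < stratRange n ν K W ℓ ∧
    ε * stratRange n ν K W ℓ / RK n ν K L
      ≤ (n - #K).choose ℓ * lam ℓ * |IhatStrat n ν K L S M W ℓ ω - stratVal n ν K W ℓ|}
  calc (ℙ {ω | ε ≤ |IhatCII n ν K lam L S M ω - CII n ν lam K|}).toReal
      ≤ (ℙ (⋃ W ∈ K.powerset, ⋃ ℓ ∈ L #W, F W ℓ)).toReal :=
        ENNReal.toReal_mono (measure_ne_top _ _)
          (measure_mono_ae (le_abs_IhatCII_sub_CII_ae_le_biUnion hL (fun ℓ h => (hlam ℓ h).le) hR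
            hdeg hε))
    _ ≤ ∑ W ∈ K.powerset, ∑ ℓ ∈ L #W, (ℙ (F W ℓ)).toReal :=
        (measureReal_biUnion_finset_le _ _).trans (sum_le_sum fun W _ =>
          measureReal_biUnion_finset_le _ _)
    _ ≤ _ := sum_le_sum fun W hW => sum_le_sum fun ℓ hℓL => by
          have hWK := mem_powerset.1 hW
          exact measureReal_stratumError_ge_le hℓL (hℓ _ ℓ hℓL) (hSmeas W ℓ) (hMmeas W ℓ)
            (hiid W hWK ℓ hℓL) (hunif W hWK ℓ hℓL) hγ (hp W hWK ℓ hℓL) (hbin W hWK ℓ hℓL)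
            (by exact_mod_cast Nat.choose_pos (hℓ _ ℓ hℓL)) (hlam ℓ (hℓ _ ℓ hℓL)) hR hε

/-- **Hoeffding-type threshold exceedance bound for the CII estimate (Theorem 4.5).** -/
theorem cii_estimate_hoeffding_bound {Ω : Type*} [MeasureSpace Ω]
    [IsProbabilityMeasure (ℙ : Measure Ω)]
    (n : ℕ) (ν : Finset (Fin n) → ℝ) (K : Finset (Fin n)) (hk : 2 ≤ K.card)
    (lam : ℕ → ℝ) (hlam : ∀ ℓ ≤ n - K.card, 0 < lam ℓ)
    (L : ℕ → Finset ℕ) (hL : ∀ w, L w ⊆ Finset.range (n - K.card + 1))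
    (hR : 0 < RK n ν K L)
    (S : Finset (Fin n) → ℕ → ℕ → Ω → Finset (Fin n))
    (M : Finset (Fin n) → ℕ → Ω → ℕ)
    (B : ℕ) (hB : 1 ≤ B) (p : Finset (Fin n) → ℕ → ℝ)
    (hSmeas : ∀ W ℓ m, Measurable (S W ℓ m)) (hMmeas : ∀ W ℓ, Measurable (M W ℓ))
    -- within each estimated stratum the samples are i.i.d. uniform on the stratum
    (hiid : ∀ W, W ⊆ K → ∀ ℓ ∈ L W.card,
      iIndepFun (m := fun _ => finsetMeasurableSpace n) (S W ℓ) ℙ)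
    (hunif : ∀ W, W ⊆ K → ∀ ℓ ∈ L W.card, ∀ (m : ℕ) (T : Finset (Fin n)),
      ℙ {ω | S W ℓ m ω = T}
        = if T ∈ strata n K ℓ then ((strata n K ℓ).card : ℝ≥0∞)⁻¹ else 0)
    -- counts: `M_{W,ℓ} = 1 + Y_{W,ℓ}` with `Y_{W,ℓ} ~ Binomial(B̃, p_{W,ℓ})`,
    -- `p_{W,ℓ} ≥ 1/γ_k`
    (hp : ∀ W, W ⊆ K → ∀ ℓ ∈ L W.card,
      1 / gam n K.card ≤ p W ℓ ∧ p W ℓ ≤ 1)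
    (hbin : ∀ W, W ⊆ K → ∀ ℓ ∈ L W.card, ∀ j : ℕ,
      ℙ {ω | M W ℓ ω = j + 1}
        = ENNReal.ofReal ((B.choose j : ℝ) * p W ℓ ^ j * (1 - p W ℓ) ^ (B - j)))
    -- each count is independent of that stratum's sample sequence
    (hindep : ∀ W, W ⊆ K → ∀ ℓ ∈ L W.card,
      IndepFun (M W ℓ) (fun ω => fun m => S W ℓ m ω) ℙ)
    (ε : ℝ) (hε : 0 < ε) :
    (ℙ {ω | ε ≤ |IhatCII n ν K lam L S M ω - CII n ν lam K|}).toReal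
      ≤ ∑ W ∈ K.powerset, ∑ ℓ ∈ L W.card,
          (Real.exp (-(B : ℝ) / (2 * gam n K.card ^ 2)) +
            2 * Real.exp (-(2 * ε ^ 2) /
                (((n - K.card).choose ℓ : ℝ) ^ 2 * lam ℓ ^ 2 * RK n ν K L ^ 2))
                  ^ (⌊(B : ℝ) / (2 * gam n K.card)⌋₊) /
              (Real.exp ((2 * ε ^ 2) /
                (((n - K.card).choose ℓ : ℝ) ^ 2 * lam ℓ ^ 2 * RK n ν K L ^ 2)) - 1)) :=
  cii_estimate_hoeffding_bound_general n ν K lam hlam L hL hR S M B p hSmeas hMmeas hiid hunif hp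
    hbin ε hε
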